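/- arXiv:2203.05245 — 2 statements merged into one kernel-verified Lean document; each statement's English description precedes it below -/
import Mathlib

section
/- If Σ is nonempty and rank(X₋) < n, then the spectral radii of the matrices in Σ are unbounded: for every real M there exists A ∈ Σ having a complex eigenvalue of modulus greater than M. -/
open Matrix Polynomial

/-- The data-based matrix `N = [[I, X_U],[0, -X₋]] Φ [[I, X_U],[0, -X₋]]ᵀ` with
`X_U = X₊ - BU`. -/
noncomputable def Nmat {n T : ℕ} (B : Matrix (Fin n) (Fin 1) ℝ)
    (Xm Xp : Matrix (Fin n) (Fin T) ℝ) (U : Matrix (Fin 1) (Fin T) ℝ)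
    (Φ : Matrix (Fin n ⊕ Fin T) (Fin n ⊕ Fin T) ℝ) :
    Matrix (Fin n ⊕ Fin n) (Fin n ⊕ Fin n) ℝ :=
  fromBlocks (1 : Matrix (Fin n) (Fin n) ℝ) (Xp - B * U) 0 (-Xm) * Φ * (fromBlocks 1 (Xp - B * U) 0 (-Xm))ᵀ

lemma abs_multiset_sum_le (r : Multiset ℂ) :
    ‖r.sum‖ ≤ (r.map (fun x : ℂ => ‖x‖)).sum := by
  induction r using Multiset.induction_on with
  | empty => simp
  | cons a s ih =>
    simp only [Multiset.sum_cons, Multiset.map_cons]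
    exact le_trans (norm_add_le _ _) (by linarith)

lemma mem_spectrum_of_isRoot_charpoly {m : ℕ} (Ac : Matrix (Fin m) (Fin m) ℂ)
    {μ : ℂ} (h : Ac.charpoly.IsRoot μ) : μ ∈ spectrum ℂ Ac := by
  rw [spectrum.mem_iff]
  intro hu
  have hmap : (charmatrix Ac).map (evalRingHom μ) =
      (algebraMap ℂ (Matrix (Fin m) (Fin m) ℂ)) μ - Ac := by
    ext i j
    by_cases hij : i = j
    · subst hij
      simp [charmatrix_apply_eq, Matrix.algebraMap_matrix_apply]
    · simp [charmatrix_apply_ne _ _ _ hij, Matrix.algebraMap_matrix_apply, hij]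
  have hdet : ((algebraMap ℂ (Matrix (Fin m) (Fin m) ℂ)) μ - Ac).det
      = Ac.charpoly.eval μ := by
    rw [← hmap, Matrix.charpoly, ← RingHom.mapMatrix_apply, ← RingHom.map_det]
    rfl
  have h0 : Ac.charpoly.eval μ = 0 := h
  have := (Matrix.isUnit_iff_isUnit_det _).mp hu
  rw [hdet, h0] at this
  exact not_isUnit_zero this

/-- If `Σ` is nonempty and `rank X₋ < n`, then the spectral radii of the matrices in
`Σ` are unbounded: for every `M` there is `A ∈ Σ` with a complex eigenvalue of
modulus exceeding `M`. -/
theorem sigma_unbounded_spectral_radius (n T : ℕ) (hn : 0 < n) (hT : 0 < T)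
    (B : Matrix (Fin n) (Fin 1) ℝ) (Xm Xp : Matrix (Fin n) (Fin T) ℝ)
    (U : Matrix (Fin 1) (Fin T) ℝ)
    (Φ₁₁ : Matrix (Fin n) (Fin n) ℝ) (Φ₁₂ : Matrix (Fin n) (Fin T) ℝ)
    (Φ₂₂ : Matrix (Fin T) (Fin T) ℝ)
    (hΦ₁₁ : Φ₁₁.IsSymm) (hΦ₂₂symm : Φ₂₂.IsSymm) (hΦ₂₂ : (-Φ₂₂).PosDef)
    (hne : ∃ A₀ : Matrix (Fin n) (Fin n) ℝ,
      (fromCols (1 : Matrix (Fin n) (Fin n) ℝ) A₀ * Nmat B Xm Xp U (fromBlocks Φ₁₁ Φ₁₂ Φ₁₂ᵀ Φ₂₂) *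
        (fromCols (1 : Matrix (Fin n) (Fin n) ℝ) A₀)ᵀ).PosSemidef)
    (hrank : Xm.rank < n) :
    ∀ M : ℝ, ∃ A : Matrix (Fin n) (Fin n) ℝ,
      (fromCols (1 : Matrix (Fin n) (Fin n) ℝ) A * Nmat B Xm Xp U (fromBlocks Φ₁₁ Φ₁₂ Φ₁₂ᵀ Φ₂₂) *
        (fromCols (1 : Matrix (Fin n) (Fin n) ℝ) A)ᵀ).PosSemidef ∧
      ∃ μ ∈ spectrum ℂ (A.map Complex.ofReal), M < ‖μ‖ := by
  intro M
  obtain ⟨A₀, hA₀⟩ := hne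
  -- a nonzero vector in the left kernel of Xm
  obtain ⟨v, hv0, hv⟩ : ∃ v : Fin n → ℝ, v ≠ 0 ∧ v ᵥ* Xm = 0 := by
    by_contra hcon
    push_neg at hcon
    have hker : LinearMap.ker (Xmᵀ).mulVecLin = ⊥ := by
      rw [LinearMap.ker_eq_bot']
      intro w hw
      by_contra hw0
      exact hcon w hw0 (by simpa using hw)
    have hrn := LinearMap.finrank_range_add_finrank_ker (Xmᵀ).mulVecLin
    rw [hker] at hrn
    have hXT : (Xmᵀ).rank = n := by
      simpa [Matrix.rank] using hrn
    rw [Matrix.rank_transpose] at hXT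
    omega
  -- the quadratic part
  set s : ℝ := ∑ i, v i * v i with hs_def
  have hs : 0 < s := by
    obtain ⟨i0, hi0⟩ := Function.ne_iff.mp hv0
    refine Finset.sum_pos' (fun i _ => mul_self_nonneg _) ⟨i0, Finset.mem_univ _, ?_⟩
    exact mul_self_pos.mpr (by simpa using hi0)
  set c : ℝ := ((n : ℝ) * (|M| + 1) + |A₀.trace| + 1) / s with hc_def
  set A : Matrix (Fin n) (Fin n) ℝ := A₀ + c • vecMulVec v v with hA_def
  -- the perturbation annihilates Xm
  have hvXm : vecMulVec v v * Xm = 0 := by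
    ext i j
    rw [Matrix.mul_apply, Matrix.zero_apply]
    have hj : ∑ k, Xm k j * v k = 0 := by
      have := congrFun hv j
      simpa [Matrix.vecMul, dotProduct, mul_comm] using this
    calc ∑ k, vecMulVec v v i k * Xm k j
        = v i * ∑ k, Xm k j * v k := by
          rw [Finset.mul_sum]
          exact Finset.sum_congr rfl fun k _ => by rw [vecMulVec_apply]; ring
      _ = 0 := by rw [hj, mul_zero]
  have hAXm : A * Xm = A₀ * Xm := by
    rw [hA_def, Matrix.add_mul, Matrix.smul_mul, hvXm, smul_zero, add_zero]
  -- the PSD condition is preserved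
  set Φ' := fromBlocks Φ₁₁ Φ₁₂ Φ₁₂ᵀ Φ₂₂ with hΦ'_def
  set P := fromBlocks (1 : Matrix (Fin n) (Fin n) ℝ) (Xp - B * U)
      (0 : Matrix (Fin n) (Fin n) ℝ) (-Xm) with hP_def
  have h1 : ∀ X : Matrix (Fin n) (Fin n) ℝ,
      fromCols (1 : Matrix (Fin n) (Fin n) ℝ) X * Nmat B Xm Xp U Φ' * (fromCols (1 : Matrix (Fin n) (Fin n) ℝ) X)ᵀ
        = ((fromCols (1 : Matrix (Fin n) (Fin n) ℝ) X : Matrix (Fin n) (Fin n ⊕ Fin n) ℝ) * P) * Φ' *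
          ((fromCols (1 : Matrix (Fin n) (Fin n) ℝ) X : Matrix (Fin n) (Fin n ⊕ Fin n) ℝ) * P)ᵀ := by
    intro X
    rw [show Nmat B Xm Xp U Φ' = P * Φ' * Pᵀ from rfl]
    simp only [Matrix.transpose_mul, Matrix.mul_assoc]
  have hFP : ∀ X : Matrix (Fin n) (Fin n) ℝ,
      (fromCols 1 X : Matrix (Fin n) (Fin n ⊕ Fin n) ℝ) * P
        = fromCols 1 ((Xp - B * U) - X * Xm) := by
    intro X
    rw [hP_def, fromCols_mul_fromBlocks]
    simp [Matrix.mul_neg, sub_eq_add_neg]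
  have hEq : fromCols (1 : Matrix (Fin n) (Fin n) ℝ) A * Nmat B Xm Xp U Φ' * (fromCols (1 : Matrix (Fin n) (Fin n) ℝ) A)ᵀ
      = fromCols (1 : Matrix (Fin n) (Fin n) ℝ) A₀ * Nmat B Xm Xp U Φ' * (fromCols (1 : Matrix (Fin n) (Fin n) ℝ) A₀)ᵀ := by
    rw [h1, h1, hFP, hFP, hAXm]
  refine ⟨A, by rw [hEq]; exact hA₀, ?_⟩
  -- spectral part
  set Ac : Matrix (Fin n) (Fin n) ℂ := A.map Complex.ofReal with hAc_def
  have hcard : Ac.charpoly.roots.card = n := by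
    have hsp : Ac.charpoly.Splits := IsAlgClosed.splits _
    rw [Polynomial.splits_iff_card_roots.mp hsp, Matrix.charpoly_natDegree_eq_dim,
      Fintype.card_fin]
  have htr : Ac.trace = ((A.trace : ℝ) : ℂ) := by
    simp [Matrix.trace, Matrix.diag, hAc_def, Matrix.map_apply]
  have htrA : A.trace = A₀.trace + ((n : ℝ) * (|M| + 1) + |A₀.trace| + 1) := by
    have hvv : (vecMulVec v v).trace = s := by
      simp [Matrix.trace, Matrix.diag, vecMulVec_apply, hs_def]
    rw [hA_def, Matrix.trace_add, Matrix.trace_smul, hvv, smul_eq_mul, hc_def,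
      div_mul_cancel₀ _ hs.ne']
  by_contra hcon
  push_neg at hcon
  have hball : ∀ x ∈ Ac.charpoly.roots.map (fun x : ℂ => ‖x‖), x ≤ M := by
    intro x hx
    obtain ⟨μ, hμ, rfl⟩ := Multiset.mem_map.mp hx
    exact hcon μ (mem_spectrum_of_isRoot_charpoly Ac (isRoot_of_mem_roots hμ))
  have hb1 : (Ac.charpoly.roots.map (fun x : ℂ => ‖x‖)).sum ≤ (n : ℝ) * M := by
    have := Multiset.sum_le_card_nsmul _ M hball
    simpa [hcard, nsmul_eq_mul] using this
  have hb2 : ‖Ac.trace‖ ≤ (n : ℝ) * M := by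
    calc ‖Ac.trace‖
        = ‖Ac.charpoly.roots.sum‖ := by
          rw [Matrix.trace_eq_sum_roots_charpoly]
      _ ≤ (Ac.charpoly.roots.map (fun x : ℂ => ‖x‖)).sum := abs_multiset_sum_le _
      _ ≤ (n : ℝ) * M := hb1
  rw [htr, Complex.norm_real, Real.norm_eq_abs] at hb2
  have hMabs : M ≤ |M| := le_abs_self M
  have hA0tr : -|A₀.trace| ≤ A₀.trace := neg_abs_le _
  have hAtr : |A.trace| ≥ A.trace := le_abs_self _
  have hn1 : (1 : ℝ) ≤ (n : ℝ) := by exact_mod_cast hn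
  nlinarith [hAtr, htrA, hb2]
end

section
/- Suppose Σ is nonempty and there exist δ > 0 and K ∈ ℝ^{1×n} such that for every A ∈ Σ there is a symmetric P ≻ 0 with (A + (1 + Δ)BK)ᵀ P (A + (1 + Δ)BK) − P ≺ 0 for every Δ ∈ [−δ, δ] (i.e., every plant in Σ is quadratically stabilized by the common logarithmically quantized feedback gain K with density ρ = (1−δ)/(1+δ)). Then rank(X₋) = n. -/
open Matrix

lemma posDef_conj_aux {n : ℕ} {X B : Matrix (Fin n) (Fin n) ℝ} (hX : X.PosDef)
    (hB : ∀ x : Fin n → ℝ, x ≠ 0 → B *ᵥ x ≠ 0) : (Bᵀ * X * B).PosDef := by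
  have hXs : Xᵀ = X := by
    have h := hX.1
    rwa [Matrix.IsHermitian, conjTranspose_eq_transpose_of_trivial] at h
  · rw [posDef_iff_dotProduct_mulVec]; constructor
    · show (Bᵀ * X * B)ᴴ = _
      rw [conjTranspose_eq_transpose_of_trivial, Matrix.transpose_mul, Matrix.transpose_mul,
        transpose_transpose, hXs, Matrix.mul_assoc]
    intro x hx
    have h1 : (Bᵀ * X * B) *ᵥ x = Bᵀ *ᵥ (X *ᵥ (B *ᵥ x)) := by
      rw [← mulVec_mulVec, ← mulVec_mulVec]
    have h2 : star x ⬝ᵥ (Bᵀ *ᵥ (X *ᵥ (B *ᵥ x))) = star (B *ᵥ x) ⬝ᵥ (X *ᵥ (B *ᵥ x)) := by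
      simp only [star_trivial]
      rw [dotProduct_mulVec, vecMul_transpose]
    rw [h1, h2]
    exact hX.dotProduct_mulVec_pos (hB x hx)

lemma posDef_diag_pos {n : ℕ} {X : Matrix (Fin n) (Fin n) ℝ} (hX : X.PosDef) (i : Fin n) :
    0 < X i i := by
  have h := hX.dotProduct_mulVec_pos (x := Pi.single i 1) (by
    intro hc
    have := congrFun hc i
    simp at this)
  simpa [mulVec_single, single_dotProduct] using h

open scoped MatrixOrder in
lemma trace_sq_lt_aux {n : ℕ} (hn : 0 < n) {P M : Matrix (Fin n) (Fin n) ℝ} (hP : P.PosDef)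
    (h : (-(Mᵀ * P * M - P)).PosDef) : (Matrix.trace M)^2 < (n:ℝ)^2 := by
  set Q := CFC.sqrt P with hQdef
  have hQ2 : Q * Q = P := CFC.sqrt_mul_sqrt_self P hP.posSemidef.nonneg
  have hQsymm : Qᵀ = Q := by
    have h1 := (CFC.sqrt_nonneg P).posSemidef.1
    rwa [Matrix.IsHermitian, conjTranspose_eq_transpose_of_trivial] at h1
  have hdet : IsUnit Q.det := by
    have hp : 0 < P.det := hP.det_pos
    rw [← hQ2, det_mul] at hp
    exact isUnit_iff_ne_zero.mpr (by nlinarith)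
  set R := Q⁻¹ with hRdef
  have hRQ : R * Q = 1 := nonsing_inv_mul Q hdet
  have hQR : Q * R = 1 := mul_nonsing_inv Q hdet
  have hRs : Rᵀ = R := by rw [hRdef, transpose_nonsing_inv, hQsymm]
  set S := Q * M * R with hSdef
  have hSt : Sᵀ = R * Mᵀ * Q := by
    rw [hSdef, Matrix.transpose_mul, Matrix.transpose_mul, hRs, hQsymm, Matrix.mul_assoc]
  have hRinj : ∀ x : Fin n → ℝ, x ≠ 0 → R *ᵥ x ≠ 0 := by
    intro x hx hc
    apply hx
    have : Q *ᵥ (R *ᵥ x) = x := by rw [mulVec_mulVec, hQR, one_mulVec]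
    rw [hc, mulVec_zero] at this
    exact this.symm
  have key : Rᵀ * (-(Mᵀ * P * M - P)) * R = 1 - Sᵀ * S := by
    rw [hRs, ← hQ2, hSt, hSdef]
    have expand : R * (-(Mᵀ * (Q * Q) * M - Q * Q)) * R
        = (R * Q) * (Q * R) - (R * Mᵀ * Q) * (Q * M * R) := by noncomm_ring
    rw [expand, hRQ, hQR, one_mul]
  have hpd1 : (1 - Sᵀ * S).PosDef := key ▸ posDef_conj_aux h hRinj
  have hdiag : ∀ i, (Sᵀ * S) i i < 1 := by
    intro i
    have := posDef_diag_pos hpd1 i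
    have h1 : (1 - Sᵀ * S) i i = 1 - (Sᵀ * S) i i := by
      simp [Matrix.sub_apply, Matrix.one_apply_eq]
    linarith [h1 ▸ this]
  haveI : Nonempty (Fin n) := Fin.pos_iff_nonempty.mp hn
  have hsum : ∑ i, (Sᵀ * S) i i < (n : ℝ) := by
    have := Finset.sum_lt_sum_of_nonempty (Finset.univ_nonempty (α := Fin n)) (fun i _ => hdiag i)
    simpa using this
  have hentry : ∀ i, (Sᵀ * S) i i = ∑ j, (S j i)^2 := by
    intro i
    simp [Matrix.mul_apply, Matrix.transpose_apply, sq]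
  have hdiagsq : ∑ i, (S i i)^2 ≤ ∑ i, (Sᵀ * S) i i := by
    apply Finset.sum_le_sum
    intro i _
    rw [hentry i]
    exact Finset.single_le_sum (f := fun j => (S j i)^2) (fun j _ => sq_nonneg _) (Finset.mem_univ i)
  have hcs : (∑ i, S i i)^2 ≤ (n : ℝ) * ∑ i, (S i i)^2 := by
    have := sq_sum_le_card_mul_sum_sq (s := (Finset.univ : Finset (Fin n))) (f := fun i => S i i)
    simpa using this
  have htrS : Matrix.trace S = ∑ i, S i i := rfl
  have htr : Matrix.trace S = Matrix.trace M := by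
    rw [hSdef, Matrix.trace_mul_cycle, hRQ, Matrix.one_mul]
  have hn' : (0:ℝ) < n := by exact_mod_cast hn
  have : (Matrix.trace S)^2 < (n:ℝ)^2 := by
    rw [htrS]
    calc (∑ i, S i i)^2 ≤ (n : ℝ) * ∑ i, (S i i)^2 := hcs
      _ ≤ (n : ℝ) * ∑ i, (Sᵀ * S) i i := by nlinarith [hdiagsq]
      _ < (n : ℝ) * n := by nlinarith [hsum]
      _ = (n:ℝ)^2 := (sq (n:ℝ)).symm
  rwa [htr] at this

/-- **Necessary rank condition** (Theorem 3): if some common feedback gain `K`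
quadratically stabilizes every plant `A ∈ Σ` through the quantization sector
`Δ ∈ [-δ, δ]` (with `Σ` nonempty), then `rank X₋ = n`. -/
theorem necessary_rank_condition (n T : ℕ) (hn : 0 < n) (hT : 0 < T)
    (B : Matrix (Fin n) (Fin 1) ℝ) (Xm Xp : Matrix (Fin n) (Fin T) ℝ)
    (U : Matrix (Fin 1) (Fin T) ℝ)
    (Φ₁₁ : Matrix (Fin n) (Fin n) ℝ) (Φ₁₂ : Matrix (Fin n) (Fin T) ℝ)
    (Φ₂₂ : Matrix (Fin T) (Fin T) ℝ)
    (hΦ₁₁ : Φ₁₁.IsSymm) (hΦ₂₂symm : Φ₂₂.IsSymm) (hΦ₂₂ : (-Φ₂₂).PosDef)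
    (hne : ∃ A₀ : Matrix (Fin n) (Fin n) ℝ,
      (fromCols (1 : Matrix (Fin n) (Fin n) ℝ) A₀ * Nmat B Xm Xp U (fromBlocks Φ₁₁ Φ₁₂ Φ₁₂ᵀ Φ₂₂) *
        (fromCols (1 : Matrix (Fin n) (Fin n) ℝ) A₀)ᵀ).PosSemidef)
    (hstab : ∃ (δ : ℝ) (K : Matrix (Fin 1) (Fin n) ℝ), 0 < δ ∧
      ∀ A : Matrix (Fin n) (Fin n) ℝ,
        (fromCols (1 : Matrix (Fin n) (Fin n) ℝ) A * Nmat B Xm Xp U (fromBlocks Φ₁₁ Φ₁₂ Φ₁₂ᵀ Φ₂₂) *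
          (fromCols (1 : Matrix (Fin n) (Fin n) ℝ) A)ᵀ).PosSemidef →
        ∃ P : Matrix (Fin n) (Fin n) ℝ, P.IsSymm ∧ P.PosDef ∧
          ∀ Δ : ℝ, Δ ∈ Set.Icc (-δ) δ →
            (-((A + (1 + Δ) • (B * K))ᵀ * P * (A + (1 + Δ) • (B * K)) - P)).PosDef) :
    Xm.rank = n := by
  by_contra hrank
  have hlt : Xm.rank < n := lt_of_le_of_ne Xm.rank_le_height hrank
  obtain ⟨ξ, hξker, hξne⟩ : ∃ ξ : Fin n → ℝ, Xmᵀ *ᵥ ξ = 0 ∧ ξ ≠ 0 := by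
    have hrt : Xmᵀ.rank < n := by rw [Matrix.rank_transpose]; exact hlt
    have hker : LinearMap.ker Xmᵀ.mulVecLin ≠ ⊥ := by
      intro hbot
      have hrn := LinearMap.finrank_range_add_finrank_ker Xmᵀ.mulVecLin
      rw [hbot, finrank_bot, add_zero, Module.finrank_fin_fun] at hrn
      have : Xmᵀ.rank = n := by rw [Matrix.rank]; exact hrn
      omega
    obtain ⟨ξ, hmem, hne'⟩ := (Submodule.ne_bot_iff _).mp hker
    refine ⟨ξ, ?_, hne'⟩
    have h := LinearMap.mem_ker.mp hmem
    rwa [Matrix.mulVecLin_apply] at h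
  obtain ⟨A₀, hA₀⟩ := hne
  obtain ⟨δ, K, hδ, hK⟩ := hstab
  set Φf := fromBlocks Φ₁₁ Φ₁₂ Φ₁₂ᵀ Φ₂₂ with hΦf
  have hs : 0 < ξ ⬝ᵥ ξ := by
    have hex : ∃ i, ξ i ≠ 0 := by
      by_contra hc; push_neg at hc; exact hξne (funext hc)
    obtain ⟨i, hi⟩ := hex
    have : 0 < ∑ j, ξ j * ξ j :=
      Finset.sum_pos' (fun j _ => mul_self_nonneg _)
        ⟨i, Finset.mem_univ i, mul_self_pos.mpr hi⟩
    simpa [dotProduct] using this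
  set s := ξ ⬝ᵥ ξ with hsdef
  set c := Matrix.trace (A₀ + (1 + (0:ℝ)) • (B * K)) with hc
  set t := ((n:ℝ) + |c| + 1) / s with ht
  set A' := A₀ + t • vecMulVec ξ ξ with hA'
  have hzero : vecMulVec ξ ξ * Xm = 0 := by
    ext i j
    simp only [Matrix.mul_apply, vecMulVec_apply, Matrix.zero_apply]
    have h1 : ∑ k, ξ i * ξ k * Xm k j = ξ i * ∑ k, Xm k j * ξ k := by
      rw [Finset.mul_sum]; congr 1; ext k; ring
    have h0 : (Xmᵀ *ᵥ ξ) j = 0 := by rw [hξker]; rfl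
    have h2 : ∑ k, Xm k j * ξ k = 0 := by
      simpa [Matrix.mulVec, dotProduct, Matrix.transpose_apply] using h0
    rw [h1, h2, mul_zero]
  have hcolmul : fromCols (1 : Matrix (Fin n) (Fin n) ℝ) A' * fromBlocks (1 : Matrix (Fin n) (Fin n) ℝ) (Xp - B*U) (0 : Matrix (Fin n) (Fin n) ℝ) (-Xm)
      = fromCols (1 : Matrix (Fin n) (Fin n) ℝ) A₀ * fromBlocks (1 : Matrix (Fin n) (Fin n) ℝ) (Xp - B*U) (0 : Matrix (Fin n) (Fin n) ℝ) (-Xm) := by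
    have hA'Xm : A' * Xm = A₀ * Xm := by
      rw [hA', Matrix.add_mul, Matrix.smul_mul, hzero, smul_zero, add_zero]
    rw [fromCols_mul_fromBlocks, fromCols_mul_fromBlocks, Matrix.mul_zero, Matrix.mul_zero,
      Matrix.mul_neg, Matrix.mul_neg, hA'Xm]
  have hmem : (fromCols (1 : Matrix (Fin n) (Fin n) ℝ) A' * Nmat B Xm Xp U Φf * (fromCols (1 : Matrix (Fin n) (Fin n) ℝ) A')ᵀ).PosSemidef := by
    have rearr : ∀ F : Matrix (Fin n) (Fin n ⊕ Fin n) ℝ,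
        F * Nmat B Xm Xp U Φf * Fᵀ
        = (F * fromBlocks (1 : Matrix (Fin n) (Fin n) ℝ) (Xp - B*U) (0 : Matrix (Fin n) (Fin n) ℝ) (-Xm)) * Φf *
          (F * fromBlocks (1 : Matrix (Fin n) (Fin n) ℝ) (Xp - B*U) (0 : Matrix (Fin n) (Fin n) ℝ) (-Xm))ᵀ := by
      intro F
      show F * (fromBlocks (1 : Matrix (Fin n) (Fin n) ℝ) (Xp - B*U) (0 : Matrix (Fin n) (Fin n) ℝ) (-Xm) * Φf * (fromBlocks (1 : Matrix (Fin n) (Fin n) ℝ) (Xp - B*U) (0 : Matrix (Fin n) (Fin n) ℝ) (-Xm))ᵀ) * Fᵀ = _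
      rw [Matrix.transpose_mul]
      simp only [Matrix.mul_assoc]
    rw [rearr, hcolmul, ← rearr]
    exact hA₀
  obtain ⟨P, hPsymm, hPpd, hLyap⟩ := hK A' hmem
  have hpd := hLyap 0 ⟨by linarith, le_of_lt hδ⟩
  have hbound := trace_sq_lt_aux hn hPpd hpd
  have hts : t * s = (n:ℝ) + |c| + 1 := div_mul_cancel₀ _ (ne_of_gt hs)
  have htrace : Matrix.trace (A' + (1 + (0:ℝ)) • (B * K)) = c + t * s := by
    have hre : A' + (1 + (0:ℝ)) • (B * K)
        = (A₀ + (1 + (0:ℝ)) • (B * K)) + t • vecMulVec ξ ξ := by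
      rw [hA']; abel
    rw [hre, Matrix.trace_add, Matrix.trace_smul, ← hc]
    have hv : (vecMulVec ξ ξ).trace = s := by
      simp [Matrix.trace, Matrix.diag, vecMulVec_apply, hsdef, dotProduct]
    rw [hv, smul_eq_mul]
  have h2 : (n:ℝ) + 1 ≤ Matrix.trace (A' + (1 + (0:ℝ)) • (B * K)) := by
    rw [htrace, hts]
    have := neg_abs_le c
    linarith
  have hn0 : (0:ℝ) ≤ n := Nat.cast_nonneg n
  nlinarith [hbound, h2, hn0]
end
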